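/- Let π : A → B be a surjective homomorphism of algebras. Then the induced map Con_c π : Con_c A → Con_c B is ideal-induced, and its 0-kernel equals the set of compact congruences of A contained in ker π, i.e., ker₀(Con_c π) = (Con_c A) ↓ ker π. -/
import Mathlib


/-- A similarity type: a set of operation symbols with arities. -/
structure Signature where
  ops : Type
  arity : ops → ℕ

/-- An algebra structure of similarity type `σ` on the set `A`. -/
structure AlgOn (σ : Signature) (A : Type*) where
  interp : ∀ o : σ.ops, (Fin (σ.arity o) → A) → A

/-- A congruence of the algebra `(A, F)`: an equivalence relation compatible
with all the operations. -/
def IsCon {σ : Signature} {A : Type*} (F : AlgOn σ A) (r : A → A → Prop) : Prop :=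
  Equivalence r ∧ ∀ (o : σ.ops) (x y : Fin (σ.arity o) → A),
    (∀ i, r (x i) (y i)) → r (F.interp o x) (F.interp o y)

/-- The congruence generated by a binary relation `s`: the intersection of all
congruences containing `s`. -/
def cgGen {σ : Signature} {A : Type*} (F : AlgOn σ A) (s : A → A → Prop) : A → A → Prop :=
  fun a b => ∀ r : A → A → Prop, IsCon F r → (∀ u v : A, s u v → r u v) → r a b

/-- A homomorphism of algebras of similarity type `σ`. -/
def IsHom {σ : Signature} {A B : Type*} (FA : AlgOn σ A) (FB : AlgOn σ B) (π : A → B) : Prop :=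
  ∀ (o : σ.ops) (x : Fin (σ.arity o) → A), π (FA.interp o x) = FB.interp o fun i => π (x i)

/-- A congruence is compact (finitely generated) when it is generated by a
finite set of pairs. -/
def FinGenCon {σ : Signature} {A : Type*} (F : AlgOn σ A) (r : A → A → Prop) : Prop :=
  ∃ p : Finset (A × A), r = cgGen F (fun a b => (a, b) ∈ p)

/-- The image of a congruence under `Con_c π`: the congruence of `B` generated by
the pairs of `π`-images. -/
def imageCon {σ : Signature} {A B : Type*} (FB : AlgOn σ B) (π : A → B)
    (r : A → A → Prop) : B → B → Prop :=
  cgGen FB (fun a b => ∃ u v : A, r u v ∧ π u = a ∧ π v = b)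

section Aux
variable {σ : Signature} {A B : Type*}

theorem relext {r r' : A → A → Prop} (h : ∀ a b, r a b ↔ r' a b) : r = r' :=
  funext fun a => funext fun b => propext (h a b)

theorem cgGen_isCon (F : AlgOn σ A) (s : A → A → Prop) : IsCon F (cgGen F s) := by
  refine ⟨⟨?_, ?_, ?_⟩, ?_⟩
  · intro a r hr _; exact hr.1.refl a
  · intro a b h r hr hs; exact hr.1.symm (h r hr hs)
  · intro a b c h1 h2 r hr hs; exact hr.1.trans (h1 r hr hs) (h2 r hr hs)
  · intro o x y h r hr hs
    exact hr.2 o x y (fun i => h i r hr hs)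

theorem cgGen_le_self (F : AlgOn σ A) (s : A → A → Prop) {a b : A} (h : s a b) :
    cgGen F s a b := fun r _ hs => hs a b h

theorem cgGen_min {F : AlgOn σ A} {s r : A → A → Prop} (hr : IsCon F r)
    (h : ∀ u v, s u v → r u v) : ∀ a b, cgGen F s a b → r a b :=
  fun _ _ hab => hab r hr h

theorem cgGen_mono {F : AlgOn σ A} {s t : A → A → Prop}
    (h : ∀ u v, s u v → cgGen F t u v) : ∀ a b, cgGen F s a b → cgGen F t a b :=
  cgGen_min (cgGen_isCon F t) h

theorem cgGen_or_closure (F : AlgOn σ A) (s t : A → A → Prop) :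
    cgGen F (fun a b => cgGen F s a b ∨ cgGen F t a b)
      = cgGen F (fun a b => s a b ∨ t a b) := by
  apply relext; intro a b; constructor
  · apply cgGen_mono
    intro u v huv
    rcases huv with h | h
    · exact cgGen_mono (fun x y hxy => cgGen_le_self F _ (Or.inl hxy)) u v h
    · exact cgGen_mono (fun x y hxy => cgGen_le_self F _ (Or.inr hxy)) u v h
  · apply cgGen_mono
    intro u v huv
    rcases huv with h | h
    · exact cgGen_le_self F _ (Or.inl (cgGen_le_self F _ h))
    · exact cgGen_le_self F _ (Or.inr (cgGen_le_self F _ h))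

theorem isCon_pullback {FA : AlgOn σ A} {FB : AlgOn σ B} {π : A → B}
    (hhom : IsHom FA FB π) {t : B → B → Prop} (ht : IsCon FB t) :
    IsCon FA (fun a b => t (π a) (π b)) := by
  refine ⟨⟨fun a => ht.1.refl _, fun h => ht.1.symm h, fun h1 h2 => ht.1.trans h1 h2⟩, ?_⟩
  intro o x y h
  have := ht.2 o (fun i => π (x i)) (fun i => π (y i)) h
  simpa only [hhom o x, hhom o y] using this

theorem isCon_eq (FB : AlgOn σ B) : IsCon FB (fun a b : B => a = b) :=
  ⟨eq_equivalence, fun o x y h => congrArg (FB.interp o) (funext h)⟩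

theorem isCon_ker {FA : AlgOn σ A} {FB : AlgOn σ B} {π : A → B} (hhom : IsHom FA FB π) :
    IsCon FA (fun a b => π a = π b) :=
  isCon_pullback hhom (isCon_eq FB)

theorem isCon_pushforward {FA : AlgOn σ A} {FB : AlgOn σ B} {π : A → B}
    (hhom : IsHom FA FB π) (hsurj : Function.Surjective π) {c : A → A → Prop}
    (hc : IsCon FA c) (hK : ∀ u v, π u = π v → c u v) :
    IsCon FB (fun b1 b2 => ∃ u v, π u = b1 ∧ π v = b2 ∧ c u v) := by
  refine ⟨⟨?_, ?_, ?_⟩, ?_⟩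
  · intro b; obtain ⟨u, rfl⟩ := hsurj b; exact ⟨u, u, rfl, rfl, hc.1.refl u⟩
  · rintro b1 b2 ⟨u, v, rfl, rfl, h⟩; exact ⟨v, u, rfl, rfl, hc.1.symm h⟩
  · rintro b1 b2 b3 ⟨u, v, rfl, h2, h⟩ ⟨u', v', h3, rfl, h'⟩
    exact ⟨u, v', rfl, rfl, hc.1.trans h (hc.1.trans (hK v u' (h2.trans h3.symm)) h')⟩
  · intro o x y h
    choose u v hu hv hcuv using h
    refine ⟨FA.interp o u, FA.interp o v, ?_, ?_, hc.2 o u v hcuv⟩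
    · rw [hhom o u]; exact congrArg (FB.interp o) (funext hu)
    · rw [hhom o v]; exact congrArg (FB.interp o) (funext hv)

/-- Transfer: a relation in the image congruence pulls back into the join with ker π. -/
theorem cgGen_transfer {FA : AlgOn σ A} {FB : AlgOn σ B} {π : A → B}
    (hhom : IsHom FA FB π) (hsurj : Function.Surjective π) (s : A → A → Prop) {u v : A}
    (h : cgGen FB (fun a b => ∃ x y, s x y ∧ π x = a ∧ π y = b) (π u) (π v)) :
    cgGen FA (fun a b => s a b ∨ π a = π b) u v := by
  set c := cgGen FA (fun a b => s a b ∨ π a = π b) with hcdef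
  have hc : IsCon FA c := cgGen_isCon _ _
  have hK : ∀ x y : A, π x = π y → c x y := fun x y h => cgGen_le_self _ _ (Or.inr h)
  have hT := isCon_pushforward hhom hsurj hc hK
  have h2 := cgGen_min hT (by
    rintro a b ⟨x, y, hs, rfl, rfl⟩
    exact ⟨x, y, rfl, rfl, cgGen_le_self _ _ (Or.inl hs)⟩) _ _ h
  obtain ⟨x, y, hx, hy, hxy⟩ := h2
  exact hc.1.trans (hK u x hx.symm) (hc.1.trans hxy (hK y v hy))

theorem imageCon_eq_iff {FB : AlgOn σ B} {π : A → B}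
    (r : A → A → Prop) :
    imageCon FB π r = (fun a b : B => a = b) ↔ ∀ a b : A, r a b → π a = π b := by
  constructor
  · intro h a b hr
    have h2 : imageCon FB π r (π a) (π b) := cgGen_le_self _ _ ⟨a, b, hr, rfl, rfl⟩
    rw [h] at h2; exact h2
  · intro h; apply relext; intro a b; constructor
    · intro hab
      refine cgGen_min (isCon_eq FB) ?_ a b hab
      rintro u' v' ⟨x, y, hr, rfl, rfl⟩; exact h x y hr
    · rintro rfl; exact (cgGen_isCon FB _).1.refl a

/-- The directed union of compactly-approximated joins with ker π is a congruence. -/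
theorem isCon_dirUnion (FA : AlgOn σ A) (π : A → B) (base : A → A → Prop) :
    IsCon FA (fun a b => ∃ q : Finset (A × A), (∀ x ∈ q, π x.1 = π x.2) ∧
      cgGen FA (fun u v => base u v ∨ (u, v) ∈ q) a b) := by
  classical
  have mono : ∀ q1 q2 : Finset (A × A), q1 ⊆ q2 → ∀ a b,
      cgGen FA (fun u v => base u v ∨ (u, v) ∈ q1) a b →
      cgGen FA (fun u v => base u v ∨ (u, v) ∈ q2) a b := by
    intro q1 q2 hsub
    apply cgGen_mono
    rintro u v (h | h)
    · exact cgGen_le_self _ _ (Or.inl h)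
    · exact cgGen_le_self _ _ (Or.inr (hsub h))
  refine ⟨⟨?_, ?_, ?_⟩, ?_⟩
  · intro a; exact ⟨∅, by simp, (cgGen_isCon _ _).1.refl a⟩
  · rintro a b ⟨q, hq, h⟩; exact ⟨q, hq, (cgGen_isCon _ _).1.symm h⟩
  · rintro a b c ⟨q1, hq1, h1⟩ ⟨q2, hq2, h2⟩
    refine ⟨q1 ∪ q2, ?_, (cgGen_isCon _ _).1.trans
      (mono q1 (q1 ∪ q2) Finset.subset_union_left a b h1)
      (mono q2 (q1 ∪ q2) Finset.subset_union_right b c h2)⟩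
    intro x hx
    rcases Finset.mem_union.1 hx with h | h
    · exact hq1 x h
    · exact hq2 x h
  · intro o x y h
    choose q hq hcg using h
    refine ⟨Finset.univ.biUnion q, ?_, ?_⟩
    · intro z hz
      obtain ⟨i, _, hi⟩ := Finset.mem_biUnion.1 hz
      exact hq i z hi
    · refine (cgGen_isCon FA _).2 o x y fun i => ?_
      exact mono (q i) _ (Finset.subset_biUnion_of_mem q (Finset.mem_univ i)) _ _ (hcg i)

end Aux


theorem stmt14 {σ : Signature} {A B : Type*} (FA : AlgOn σ A) (FB : AlgOn σ B)
    (π : A → B) (hhom : IsHom FA FB π) (hsurj : Function.Surjective π) :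
    -- `Con_c π` is surjective
    (∀ s : B → B → Prop, FinGenCon FB s → ∃ r : A → A → Prop,
      FinGenCon FA r ∧ imageCon FB π r = s) ∧
    -- witnesses for identified pairs: `Con_c π` is ideal-induced
    (∀ r r' : A → A → Prop, FinGenCon FA r → FinGenCon FA r' →
      imageCon FB π r = imageCon FB π r' →
      ∃ z : A → A → Prop, FinGenCon FA z ∧
        cgGen FA (fun a b => r a b ∨ z a b) = cgGen FA (fun a b => r' a b ∨ z a b) ∧
        imageCon FB π z = (fun a b : B => a = b)) ∧
    -- `ker₀ (Con_c π) = (Con_c A) ↓ ker π`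
    (∀ r : A → A → Prop, FinGenCon FA r →
      (imageCon FB π r = (fun a b : B => a = b) ↔ ∀ a b : A, r a b → π a = π b)) := by
  classical
  refine ⟨?_, ?_, fun r _ => imageCon_eq_iff r⟩
  · -- surjectivity
    rintro s ⟨pB, rfl⟩
    set f := Function.surjInv hsurj with hf
    have hfπ : ∀ b, π (f b) = b := fun b => Function.surjInv_eq hsurj b
    refine ⟨cgGen FA (fun a b => (a, b) ∈ pB.image (fun pr => (f pr.1, f pr.2))),
      ⟨_, rfl⟩, ?_⟩
    apply relext; intro a b; constructor
    · refine cgGen_min (cgGen_isCon FB _) ?_ a b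
      rintro u' v' ⟨u, v, huv, rfl, rfl⟩
      have hpull := isCon_pullback hhom (cgGen_isCon FB (fun a b => (a, b) ∈ pB))
      refine cgGen_min hpull ?_ u v huv
      intro x y hxy
      simp only [Finset.mem_image] at hxy
      obtain ⟨pr, hpr, heq⟩ := hxy
      obtain ⟨h1, h2⟩ := Prod.mk.injEq .. ▸ heq
      subst h1; subst h2
      show cgGen FB _ (π (f pr.1)) (π (f pr.2))
      rw [hfπ, hfπ]
      exact cgGen_le_self _ _ hpr
    · refine cgGen_min (cgGen_isCon FB _) ?_ a b
      intro b1 b2 hb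
      exact cgGen_le_self _ _
        ⟨f b1, f b2, cgGen_le_self _ _ (Finset.mem_image_of_mem _ hb), hfπ b1, hfπ b2⟩
  · -- ideal-induced
    intro r r' hr hr' heq
    obtain ⟨p, hp⟩ := hr
    obtain ⟨p', hp'⟩ := hr'
    have key : ∀ (r1 r2 : A → A → Prop) (p1 : Finset (A × A)),
        r1 = cgGen FA (fun a b => (a, b) ∈ p1) →
        imageCon FB π r1 = imageCon FB π r2 →
        ∀ pr : A × A, ∃ q : Finset (A × A), (∀ x ∈ q, π x.1 = π x.2) ∧
          (pr ∈ p1 → cgGen FA (fun a b => r2 a b ∨ (a, b) ∈ q) pr.1 pr.2) := by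
      intro r1 r2 p1 hp1 he pr
      by_cases hmem : pr ∈ p1
      · have h1 : r1 pr.1 pr.2 := by rw [hp1]; exact cgGen_le_self _ _ hmem
        have h2 : imageCon FB π r2 (π pr.1) (π pr.2) := by
          rw [← he]; exact cgGen_le_self _ _ ⟨pr.1, pr.2, h1, rfl, rfl⟩
        have h3 : cgGen FA (fun a b => r2 a b ∨ π a = π b) pr.1 pr.2 :=
          cgGen_transfer hhom hsurj r2 h2
        have h4 := cgGen_min (isCon_dirUnion FA π r2) ?_ pr.1 pr.2 h3
        · obtain ⟨q, hq, hcg⟩ := h4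
          exact ⟨q, hq, fun _ => hcg⟩
        · rintro u v (h | h)
          · exact ⟨∅, by simp, cgGen_le_self _ _ (Or.inl h)⟩
          · exact ⟨{(u, v)}, by simpa using h,
              cgGen_le_self _ _ (Or.inr (Finset.mem_singleton_self _))⟩
      · exact ⟨∅, by simp, fun h => absurd h hmem⟩
    choose fq hf1 hf2 using key r r' p hp heq
    choose gq hg1 hg2 using key r' r p' hp' heq.symm
    set Q : Finset (A × A) := p.biUnion fq ∪ p'.biUnion gq with hQ
    have hQK : ∀ x ∈ Q, π x.1 = π x.2 := by
      intro x hx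
      rcases Finset.mem_union.1 hx with h | h
      · obtain ⟨pr, _, hpr⟩ := Finset.mem_biUnion.1 h
        exact hf1 pr x hpr
      · obtain ⟨pr, _, hpr⟩ := Finset.mem_biUnion.1 h
        exact hg1 pr x hpr
    refine ⟨cgGen FA (fun a b => (a, b) ∈ Q), ⟨Q, rfl⟩, ?_, ?_⟩
    · have e1 : cgGen FA (fun a b => r a b ∨ cgGen FA (fun a b => (a, b) ∈ Q) a b)
          = cgGen FA (fun a b => (a, b) ∈ p ∨ (a, b) ∈ Q) := by
        rw [hp]; exact cgGen_or_closure FA _ _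
      have e2 : cgGen FA (fun a b => r' a b ∨ cgGen FA (fun a b => (a, b) ∈ Q) a b)
          = cgGen FA (fun a b => (a, b) ∈ p' ∨ (a, b) ∈ Q) := by
        rw [hp']; exact cgGen_or_closure FA _ _
      rw [e1, e2]
      apply relext; intro a b
      constructor
      · refine cgGen_min (cgGen_isCon FA _) ?_ a b
        rintro u v (h | h)
        · refine cgGen_mono ?_ u v (hf2 (u, v) h)
          rintro x y (h' | h')
          · rw [hp'] at h'
            exact cgGen_mono (fun a b hab => cgGen_le_self _ _ (Or.inl hab)) x y h'
          · exact cgGen_le_self _ _ (Or.inr (Finset.mem_union_left _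
              (Finset.mem_biUnion.2 ⟨(u, v), h, h'⟩)))
        · exact cgGen_le_self _ _ (Or.inr h)
      · refine cgGen_min (cgGen_isCon FA _) ?_ a b
        rintro u v (h | h)
        · refine cgGen_mono ?_ u v (hg2 (u, v) h)
          rintro x y (h' | h')
          · rw [hp] at h'
            exact cgGen_mono (fun a b hab => cgGen_le_self _ _ (Or.inl hab)) x y h'
          · exact cgGen_le_self _ _ (Or.inr (Finset.mem_union_right _
              (Finset.mem_biUnion.2 ⟨(u, v), h, h'⟩)))
        · exact cgGen_le_self _ _ (Or.inr h)
    · refine (imageCon_eq_iff _).2 ?_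
      intro a b hz
      exact cgGen_min (isCon_ker hhom) (fun u v h => hQK (u, v) h) a b hz
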